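/- Let g be a compact simple Lie algebra, t a maximal abelian subalgebra, Π = {α_1,…,α_n} the fundamental roots, δ = Σ_j m_j α_j the highest root, and K_i ∈ t_C defined by α_j(K_i) = δ_{ji}. If m_i = 1 and σ := Ad(exp(π/2)√−1K_i), then the fixed-point algebra g^σ equals g^{τ_{K_i}} where τ_{K_i} = Ad(exp π√−1K_i); consequently, since τ_{K_i} is an involution, (g, g^σ) is a symmetric pair. -/

import Mathlib

/-!
Common framework: we model the complexification `gC` of a compact Lie algebra `g` as a
complex Lie algebra, the compact real form `g` and the maximal abelian subalgebra `t`
as real Lie subalgebras of `gC`, roots of `(gC, tC)` as complex-linear functionals on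
`gC` (only their restriction to `tC`, the complex span of `t`, matters), and the
inner automorphisms `Ad(exp X) = exp (ad X)` through an abstract family `expAd`
characterized by its action on eigenvectors of `ad X` (which determines it on the
compact form, where every `ad X` is semisimple).
-/

open Complex

namespace Paper

variable (gC : Type) [LieRing gC] [LieAlgebra ℂ gC] [LieAlgebra ℝ gC]
  [IsScalarTower ℝ ℂ gC] [FiniteDimensional ℂ gC]

/-- Composition group structure on the Lie algebra automorphisms of `gC`. -/
noncomputable instance : Group (gC ≃ₗ⁅ℂ⁆ gC) where
  mul f g := g.trans f
  one := LieEquiv.refl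
  inv f := f.symm
  mul_assoc f g h := rfl
  one_mul f := rfl
  mul_one f := rfl
  inv_mul_cancel f := by
    ext x
    exact f.symm_apply_apply x

/-- The complex span `t_ℂ` of a real subalgebra `t` of `gC`. -/
def cspan (t : LieSubalgebra ℝ gC) : Submodule ℂ gC := Submodule.span ℂ (t : Set gC)

/-- The root space of the functional `a` with respect to `t_ℂ`. -/
def rootSpace (t : LieSubalgebra ℝ gC) (a : Module.Dual ℂ gC) : Set gC :=
  {X : gC | ∀ H ∈ cspan gC t, ⁅H, X⁆ = a H • X}

/-- `a` is a root of `(gC, t_ℂ)`. -/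
def IsRoot (t : LieSubalgebra ℝ gC) (a : Module.Dual ℂ gC) : Prop :=
  (∃ H ∈ cspan gC t, a H ≠ 0) ∧ ∃ X : gC, X ≠ 0 ∧ X ∈ rootSpace gC t a

/-- `g` is a compact real form of `gC`: `gC = g ⊕ √-1 g` and the Killing form of `g`
is negative definite. -/
structure IsCompactForm (g : LieSubalgebra ℝ gC) : Prop where
  spans : ∀ z : gC, ∃ x ∈ g, ∃ y ∈ g, z = x + Complex.I • y
  inj : ∀ x : gC, x ∈ g → Complex.I • x ∈ g → x = 0
  negdef : ∀ x : ↥g, x ≠ 0 → killingForm ℝ ↥g x x < 0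

/-- `t` is a maximal abelian subalgebra of `g`. -/
structure IsMaxAbelian (g t : LieSubalgebra ℝ gC) : Prop where
  le : t ≤ g
  abelian : ∀ x ∈ t, ∀ y ∈ t, ⁅x, y⁆ = (0 : gC)
  max : ∀ t' : LieSubalgebra ℝ gC, t' ≤ g →
    (∀ x ∈ t', ∀ y ∈ t', ⁅x, y⁆ = (0 : gC)) → t ≤ t' → t' = t

/-- `α 1, …, α n` is a system of fundamental (simple) roots of `Δ(gC, t_ℂ)` and
`K 1, …, K n` is the dual basis of `t_ℂ`, i.e. `α i (K j) = δ_{ij}`. -/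
structure IsSimpleSystem (t : LieSubalgebra ℝ gC) (n : ℕ) (α : ℕ → Module.Dual ℂ gC)
    (K : ℕ → gC) : Prop where
  isRoot : ∀ i ∈ Finset.Icc 1 n, IsRoot gC t (α i)
  decomp : ∀ b : Module.Dual ℂ gC, IsRoot gC t b →
    (∃ k : ℕ → ℕ, ∀ H ∈ cspan gC t, b H = ∑ j ∈ Finset.Icc 1 n, (k j : ℂ) * α j H) ∨
    (∃ k : ℕ → ℕ, ∀ H ∈ cspan gC t, b H = -∑ j ∈ Finset.Icc 1 n, (k j : ℂ) * α j H)
  K_mem : ∀ j ∈ Finset.Icc 1 n, K j ∈ cspan gC t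
  K_dual : ∀ i ∈ Finset.Icc 1 n, ∀ j ∈ Finset.Icc 1 n, α i (K j) = if i = j then 1 else 0

/-- `δ = Σ m_j α_j` is the highest root of `Δ(gC, t_ℂ)`. -/
structure IsHighestRoot (t : LieSubalgebra ℝ gC) (n : ℕ) (α : ℕ → Module.Dual ℂ gC)
    (δ : Module.Dual ℂ gC) (m : ℕ → ℕ) : Prop where
  isRoot : IsRoot gC t δ
  decomp : ∀ H ∈ cspan gC t, δ H = ∑ j ∈ Finset.Icc 1 n, (m j : ℂ) * α j H
  highest : ∀ (b : Module.Dual ℂ gC) (k : ℕ → ℕ), IsRoot gC t b →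
    (∀ H ∈ cspan gC t, b H = ∑ j ∈ Finset.Icc 1 n, (k j : ℂ) * α j H) →
    ∀ j ∈ Finset.Icc 1 n, k j ≤ m j

/-- `expAd X` is the inner automorphism `Ad(exp X) = exp (ad X)` of `gC`:
it multiplies each eigenvector of `ad X` with eigenvalue `c` by `e^c`, it is additive on
commuting arguments, and conjugation by any automorphism transports it naturally. -/
structure IsExpAd (expAd : gC → (gC ≃ₗ⁅ℂ⁆ gC)) : Prop where
  eig : ∀ (X Y : gC) (c : ℂ), ⁅X, Y⁆ = c • Y → expAd X Y = Complex.exp c • Y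
  add : ∀ X Y : gC, ⁅X, Y⁆ = 0 → expAd (X + Y) = expAd X * expAd Y
  conj : ∀ (f : gC ≃ₗ⁅ℂ⁆ gC) (X : gC), f * expAd X * f⁻¹ = expAd (f X)

/-- The group `Int(s)` of inner automorphisms generated by `exp (ad X)`, `X ∈ s`. -/
noncomputable def Inn (expAd : gC → (gC ≃ₗ⁅ℂ⁆ gC)) (s : LieSubalgebra ℝ gC) :
    Subgroup (gC ≃ₗ⁅ℂ⁆ gC) :=
  Subgroup.closure (expAd '' (s : Set gC))

/-- The automorphism `τ_H = Ad(exp π √-1 H)`. -/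
noncomputable def tau (expAd : gC → (gC ≃ₗ⁅ℂ⁆ gC)) (H : gC) : gC ≃ₗ⁅ℂ⁆ gC :=
  expAd (((Real.pi : ℂ) * Complex.I) • H)

/-- The automorphism `Ad(exp (π/2) √-1 H)`. -/
noncomputable def sigmaAd (expAd : gC → (gC ≃ₗ⁅ℂ⁆ gC)) (H : gC) : gC ≃ₗ⁅ℂ⁆ gC :=
  expAd ((((Real.pi / 2 : ℝ) : ℂ) * Complex.I) • H)

/-- The fixed point set `g^f` of an automorphism `f` inside the real form `g`. -/
def FixIn (g : LieSubalgebra ℝ gC) (f : gC ≃ₗ⁅ℂ⁆ gC) : Set gC :=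
  {x : gC | x ∈ g ∧ f x = x}

/-- Root space decomposition: `gC` is spanned by `t_ℂ` together with the root spaces. -/
def SpansByRoots (t : LieSubalgebra ℝ gC) : Prop :=
  Submodule.span ℂ ((cspan gC t : Set gC) ∪
    {X : gC | ∃ a : Module.Dual ℂ gC, IsRoot gC t a ∧ X ∈ rootSpace gC t a}) = ⊤

/-!
Since `m i = 1`, every root takes one of the values `0, ±1` on `K i`, so `σ` acts on `t_ℂ` and
the root spaces by the scalars `1, ±√-1`: `(σ - 1)(σ² + 1) = 0`. Hence `σ⁴ = 1`, and `τ = σ²`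
has the same fixed points as `σ`. Because the Killing form of `g` is negative definite, roots
are imaginary on `t`, so conjugation with respect to `g` exchanges the root spaces of `a` and
`-a`; it therefore commutes with `τ`, which thus preserves `g`. Finally `τ ≠ 1`, as it acts by
`-1` on the root space of `δ`.
-/

section ComplexStructure

variable {L : Type} [LieRing L] [LieAlgebra ℂ L]

theorem lie_add_I_smul (x y x' y' : L) :
    ⁅x + I • y, x' + I • y'⁆ = (⁅x, x'⁆ - ⁅y, y'⁆) + I • (⁅x, y'⁆ + ⁅y, x'⁆) := by
  simp only [lie_add, add_lie, lie_smul, smul_lie, smul_smul, I_mul_I, smul_add, neg_one_smul]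
  module

variable [LieAlgebra ℝ L] [IsScalarTower ℝ ℂ L]

theorem ofReal_smul_eq_smul (r : ℝ) (x : L) : (r : ℂ) • x = r • x :=
  algebraMap_smul ℂ r x

theorem smul_add_I_smul (c : ℂ) (x y : L) :
    c • (x + I • y) = (c.re • x - c.im • y) + I • (c.im • x + c.re • y) := by
  simp only [← ofReal_smul_eq_smul]
  match_scalars <;> simp [Complex.ext_iff]

theorem mem_cspan_iff {t : LieSubalgebra ℝ L} {z : L} :
    z ∈ cspan L t ↔ ∃ x ∈ t, ∃ y ∈ t, z = x + I • y := by
  refine ⟨fun hz => ?_, ?_⟩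
  · induction hz using Submodule.span_induction with
    | mem w hw => exact ⟨w, hw, 0, t.zero_mem, by simp⟩
    | zero => exact ⟨0, t.zero_mem, 0, t.zero_mem, by simp⟩
    | add _ _ _ _ ih ih' =>
      obtain ⟨x, hx, y, hy, rfl⟩ := ih
      obtain ⟨x', hx', y', hy', rfl⟩ := ih'
      exact ⟨x + x', add_mem hx hx', y + y', add_mem hy hy', by module⟩
    | smul c _ _ ih =>
      obtain ⟨x, hx, y, hy, rfl⟩ := ih
      exact ⟨_, sub_mem (t.smul_mem _ hx) (t.smul_mem _ hy),
        _, add_mem (t.smul_mem _ hx) (t.smul_mem _ hy), smul_add_I_smul c x y⟩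
  · rintro ⟨x, hx, y, hy, rfl⟩
    exact add_mem (Submodule.subset_span hx) (Submodule.smul_mem _ _ (Submodule.subset_span hy))

theorem lie_eq_zero_of_mem_cspan {t : LieSubalgebra ℝ L}
    (hab : ∀ x ∈ t, ∀ y ∈ t, ⁅x, y⁆ = (0 : L)) {z w : L}
    (hz : z ∈ cspan L t) (hw : w ∈ cspan L t) : ⁅z, w⁆ = 0 := by
  obtain ⟨x, hx, y, hy, rfl⟩ := mem_cspan_iff.1 hz
  obtain ⟨x', hx', y', hy', rfl⟩ := mem_cspan_iff.1 hw
  rw [lie_add_I_smul, hab _ hx _ hx', hab _ hy _ hy', hab _ hx _ hy', hab _ hy _ hx']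
  simp

end ComplexStructure

namespace IsCompactForm

variable {L : Type} [LieRing L] [LieAlgebra ℂ L] [LieAlgebra ℝ L] {g : LieSubalgebra ℝ L}

theorem eq_and_eq_of_add_I_smul_eq (hg : IsCompactForm L g) {x y x' y' : L}
    (hx : x ∈ g) (hy : y ∈ g) (hx' : x' ∈ g) (hy' : y' ∈ g)
    (h : x + I • y = x' + I • y') : x = x' ∧ y = y' := by
  have hI : I • (y' - y) = x - x' := by rw [smul_sub]; linear_combination (norm := module) -h
  have hy : y' - y = 0 := hg.inj _ (sub_mem hy' hy) (hI ▸ sub_mem hx hx')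
  rw [hy, smul_zero, eq_comm, sub_eq_zero] at hI
  exact ⟨hI, (sub_eq_zero.1 hy).symm⟩

/-- The `g`-component of `z = x + I • y`. -/
noncomputable def re (hg : IsCompactForm L g) (z : L) : L := (hg.spans z).choose

theorem re_add_I_smul (hg : IsCompactForm L g) {x y : L} (hx : x ∈ g) (hy : y ∈ g) :
    hg.re (x + I • y) = x := by
  have h := (hg.spans (x + I • y)).choose_spec
  obtain ⟨hy', hxy⟩ := h.2.choose_spec
  exact (hg.eq_and_eq_of_add_I_smul_eq h.1 hy' hx hy hxy.symm).1

theorem re_add (hg : IsCompactForm L g) (z w : L) : hg.re (z + w) = hg.re z + hg.re w := by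
  obtain ⟨x, hx, y, hy, rfl⟩ := hg.spans z
  obtain ⟨x', hx', y', hy', rfl⟩ := hg.spans w
  rw [show x + I • y + (x' + I • y') = (x + x') + I • (y + y') by module,
    hg.re_add_I_smul hx hy, hg.re_add_I_smul hx' hy',
    hg.re_add_I_smul (add_mem hx hx') (add_mem hy hy')]

variable [IsScalarTower ℝ ℂ L]

/-- Complex conjugation of `L` with respect to the real form `g`: `x + I • y ↦ x - I • y`. -/
noncomputable def conj (hg : IsCompactForm L g) : L →ₗ⋆[ℂ] L where
  toFun z := 2 • hg.re z - z
  map_add' z w := by rw [hg.re_add]; module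
  map_smul' c z := by
    obtain ⟨x, hx, y, hy, rfl⟩ := hg.spans z
    rw [smul_add_I_smul, hg.re_add_I_smul (sub_mem (g.smul_mem _ hx) (g.smul_mem _ hy))
      (add_mem (g.smul_mem _ hx) (g.smul_mem _ hy)), hg.re_add_I_smul hx hy]
    simp only [← ofReal_smul_eq_smul]
    match_scalars <;> apply Complex.ext <;> simp <;> ring

theorem conj_add_I_smul (hg : IsCompactForm L g) {x y : L} (hx : x ∈ g) (hy : y ∈ g) :
    hg.conj (x + I • y) = x - I • y := by
  change 2 • hg.re _ - _ = _
  rw [hg.re_add_I_smul hx hy]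
  module

theorem conj_sub_I_smul (hg : IsCompactForm L g) {x y : L} (hx : x ∈ g) (hy : y ∈ g) :
    hg.conj (x - I • y) = x + I • y := by
  simpa [← sub_eq_add_neg] using hg.conj_add_I_smul hx (neg_mem hy)

theorem conj_conj (hg : IsCompactForm L g) (z : L) : hg.conj (hg.conj z) = z := by
  obtain ⟨x, hx, y, hy, rfl⟩ := hg.spans z
  rw [hg.conj_add_I_smul hx hy, hg.conj_sub_I_smul hx hy]

theorem conj_eq_self_iff (hg : IsCompactForm L g) {z : L} : hg.conj z = z ↔ z ∈ g := by
  obtain ⟨x, hx, y, hy, rfl⟩ := hg.spans z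
  rw [hg.conj_add_I_smul hx hy]
  constructor
  · intro h
    have h2 : (2 * I) • y = 0 := by linear_combination (norm := module) -h
    simpa [(smul_eq_zero.1 h2).resolve_left (by simp)] using hx
  · intro h
    have hy0 : y = 0 := hg.inj y hy (by simpa using sub_mem h hx)
    simp [hy0]

theorem conj_lie (hg : IsCompactForm L g) (z w : L) :
    hg.conj ⁅z, w⁆ = ⁅hg.conj z, hg.conj w⁆ := by
  obtain ⟨x, hx, y, hy, rfl⟩ := hg.spans z
  obtain ⟨x', hx', y', hy', rfl⟩ := hg.spans w
  rw [lie_add_I_smul, hg.conj_add_I_smul hx hy, hg.conj_add_I_smul hx' hy',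
    hg.conj_add_I_smul (sub_mem (g.lie_mem hx hx') (g.lie_mem hy hy'))
      (add_mem (g.lie_mem hx hy') (g.lie_mem hy hx'))]
  simp only [sub_eq_add_neg (G := L), ← smul_neg, lie_add_I_smul, neg_lie, lie_neg, neg_neg]
  module

end IsCompactForm

section Roots

variable {L : Type} [LieRing L] [LieAlgebra ℂ L] [LieAlgebra ℝ L] {g t : LieSubalgebra ℝ L}

/-- `ad H` is skew for the negative definite, invariant Killing form of `g`, so it has no
eigenvalue with nonzero real part. -/
theorem IsCompactForm.eq_zero_of_lie_eq (hg : IsCompactForm L g) {H u v : L}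
    (hH : H ∈ g) (hu : u ∈ g) (hv : v ∈ g) (huv : u ≠ 0 ∨ v ≠ 0) {p q : ℝ}
    (hHu : ⁅H, u⁆ = p • u - q • v) (hHv : ⁅H, v⁆ = q • u + p • v) : p = 0 := by
  set B := killingForm ℝ g
  let u' : g := ⟨u, hu⟩
  let v' : g := ⟨v, hv⟩
  let H' : g := ⟨H, hH⟩
  have hinv : ∀ w : g, B ⁅H', w⁆ w = 0 := fun w => by
    rw [LieModule.traceForm_apply_lie_apply, lie_self, map_zero]
  have hu' := hinv u'
  have hv' := hinv v'
  rw [show ⁅H', u'⁆ = p • u' - q • v' from Subtype.ext hHu] at hu'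
  rw [show ⁅H', v'⁆ = q • u' + p • v' from Subtype.ext hHv] at hv'
  simp only [map_sub, map_add, map_smul, LinearMap.sub_apply, LinearMap.add_apply,
    LinearMap.smul_apply, smul_eq_mul] at hu' hv'
  rw [LieModule.traceForm_comm ℝ g g u' v'] at hv'
  have hneg : ∀ w : g, B w w ≤ 0 := fun w => by
    rcases eq_or_ne w 0 with rfl | hw
    · simp
    · exact (hg.negdef w hw).le
  have hlt : B u' u' + B v' v' < 0 := by
    rcases huv with h | h
    · linarith [hg.negdef u' fun h' => h (congrArg Subtype.val h'), hneg v']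
    · linarith [hg.negdef v' fun h' => h (congrArg Subtype.val h'), hneg u']
  have : p * (B u' u' + B v' v') = 0 := by linarith
  exact (mul_eq_zero.1 this).resolve_right hlt.ne

variable [IsScalarTower ℝ ℂ L]

theorem IsCompactForm.re_apply_eq_zero (hg : IsCompactForm L g) (hle : t ≤ g)
    {a : Module.Dual ℂ L} {X : L} (hX0 : X ≠ 0) (hX : X ∈ rootSpace L t a)
    {H : L} (hH : H ∈ t) : (a H).re = 0 := by
  obtain ⟨u, hu, v, hv, rfl⟩ := hg.spans X
  have h := hX H (Submodule.subset_span hH)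
  rw [lie_add, lie_smul, smul_add_I_smul] at h
  obtain ⟨hHu, hHv⟩ := hg.eq_and_eq_of_add_I_smul_eq (g.lie_mem (hle hH) hu)
    (g.lie_mem (hle hH) hv) (sub_mem (g.smul_mem _ hu) (g.smul_mem _ hv))
    (add_mem (g.smul_mem _ hu) (g.smul_mem _ hv)) h
  refine hg.eq_zero_of_lie_eq (hle hH) hu hv ?_ hHu hHv
  by_contra! h0
  exact hX0 (by simp [h0])

theorem IsCompactForm.conj_mem_cspan (hg : IsCompactForm L g) (hle : t ≤ g) {H : L}
    (hH : H ∈ cspan L t) : hg.conj H ∈ cspan L t := by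
  obtain ⟨x, hx, y, hy, rfl⟩ := mem_cspan_iff.1 hH
  rw [hg.conj_add_I_smul (hle hx) (hle hy), sub_eq_add_neg, ← smul_neg]
  exact mem_cspan_iff.2 ⟨x, hx, -y, neg_mem hy, rfl⟩

theorem IsCompactForm.conj_mem_rootSpace (hg : IsCompactForm L g) (hle : t ≤ g)
    {a : Module.Dual ℂ L} {X : L} (hX : X ∈ rootSpace L t a) :
    hg.conj X ∈ rootSpace L t (-a) := by
  rcases eq_or_ne X 0 with rfl | hX0
  · simp [rootSpace]
  intro H hH
  obtain ⟨x, hx, y, hy, rfl⟩ := mem_cspan_iff.1 hH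
  have hmem : x - I • y ∈ cspan L t := by
    rw [← hg.conj_add_I_smul (hle hx) (hle hy)]
    exact hg.conj_mem_cspan hle hH
  have hre := fun {H} (hH : H ∈ t) => hg.re_apply_eq_zero hle hX0 hX hH
  calc ⁅x + I • y, hg.conj X⁆ = hg.conj ⁅x - I • y, X⁆ := by
        rw [hg.conj_lie, hg.conj_sub_I_smul (hle hx) (hle hy)]
    _ = starRingEnd ℂ (a (x - I • y)) • hg.conj X := by rw [hX _ hmem, map_smulₛₗ]
    _ = (-a) (x + I • y) • hg.conj X := by
        congr 1
        apply Complex.ext <;> simp [hre hx, hre hy]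

theorem IsRoot.neg (hg : IsCompactForm L g) (hle : t ≤ g) {a : Module.Dual ℂ L}
    (ha : IsRoot L t a) : IsRoot L t (-a) := by
  obtain ⟨⟨H, hH, haH⟩, X, hX0, hX⟩ := ha
  refine ⟨⟨H, hH, by simpa using haH⟩, hg.conj X, ?_, hg.conj_mem_rootSpace hle hX⟩
  intro h
  apply hX0
  rw [← hg.conj_conj X, h, map_zero]

end Roots

section CubicRelation

variable {𝕜 V : Type*} [Field 𝕜] [AddCommGroup V] [Module 𝕜 V] {f : V →ₗ[𝕜] V}

theorem LinearMap.apply_four_of_cubic (hf : ∀ x, f (f (f x)) + f x = f (f x) + x) (x : V) :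
    f (f (f (f x))) = x := by
  have h := congrArg f (hf x)
  rw [map_add, map_add] at h
  linear_combination (norm := module) h + hf x

variable [CharZero 𝕜]

theorem LinearMap.apply_eq_self_of_cubic (hf : ∀ x, f (f (f x)) + f x = f (f x) + x) {x : V}
    (hx : f (f x) = x) : f x = x := by
  have h := hf x
  rw [hx] at h
  have h2 : (2 : 𝕜) • (f x - x) = 0 := by linear_combination (norm := module) h
  exact sub_eq_zero.1 ((smul_eq_zero.1 h2).resolve_left two_ne_zero)

end CubicRelation

section SimpleSystem

variable {L : Type} [LieRing L] [LieAlgebra ℂ L] [LieAlgebra ℝ L] {t : LieSubalgebra ℝ L}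
  {n : ℕ} {α : ℕ → Module.Dual ℂ L} {K : ℕ → L}

theorem IsSimpleSystem.sum_mul_apply_K (hsys : IsSimpleSystem L t n α K) {i : ℕ}
    (hi : i ∈ Finset.Icc 1 n) (k : ℕ → ℕ) :
    ∑ j ∈ Finset.Icc 1 n, (k j : ℂ) * α j (K i) = k i := by
  rw [Finset.sum_eq_single_of_mem i hi fun j hj hji => by simp [hsys.K_dual j hj i hi, hji],
    hsys.K_dual i hi i hi, if_pos rfl, mul_one]

variable {δ : Module.Dual ℂ L} {m : ℕ → ℕ} {i : ℕ}

theorem IsHighestRoot.apply_K (hδ : IsHighestRoot L t n α δ m) (hsys : IsSimpleSystem L t n α K)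
    (hi : i ∈ Finset.Icc 1 n) : δ (K i) = m i := by
  rw [hδ.decomp _ (hsys.K_mem i hi), hsys.sum_mul_apply_K hi]

theorem IsHighestRoot.root_apply_K_eq_zero_or_one_or_neg_one [IsScalarTower ℝ ℂ L]
    {g : LieSubalgebra ℝ L} (hg : IsCompactForm L g) (hle : t ≤ g) (hδ : IsHighestRoot L t n α δ m)
    (hsys : IsSimpleSystem L t n α K) (hi : i ∈ Finset.Icc 1 n) (hmi : m i = 1)
    {a : Module.Dual ℂ L} (ha : IsRoot L t a) :
    a (K i) = 0 ∨ a (K i) = 1 ∨ a (K i) = -1 := by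
  have hKi := hsys.K_mem i hi
  rcases hsys.decomp a ha with ⟨k, hk⟩ | ⟨k, hk⟩
  · have hki : k i ≤ 1 := hmi ▸ hδ.highest a k ha hk i hi
    rw [hk _ hKi, hsys.sum_mul_apply_K hi]
    interval_cases k i <;> simp
  · have hk' : ∀ H ∈ cspan L t, (-a) H = ∑ j ∈ Finset.Icc 1 n, (k j : ℂ) * α j H :=
      fun H hH => by simp [hk H hH]
    have hki : k i ≤ 1 := hmi ▸ hδ.highest (-a) k (ha.neg hg hle) hk' i hi
    rw [hk _ hKi, hsys.sum_mul_apply_K hi]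
    interval_cases k i <;> simp

end SimpleSystem

section ExpAd

variable {L : Type} [LieRing L] [LieAlgebra ℂ L] {expAd : L → L ≃ₗ⁅ℂ⁆ L}

theorem IsExpAd.apply_of_lie_eq_zero (hexp : IsExpAd L expAd) {X Y : L} (h : ⁅X, Y⁆ = 0) :
    expAd X Y = Y := by
  simpa using hexp.eig X Y 0 (by simpa using h)

theorem IsExpAd.tau_eq_sigmaAd_mul_sigmaAd (hexp : IsExpAd L expAd) (H : L) :
    tau L expAd H = sigmaAd L expAd H * sigmaAd L expAd H := by
  rw [tau, sigmaAd, ← hexp.add _ _ (by rw [lie_self]), ← add_smul]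
  congr 2
  push_cast
  ring

variable [LieAlgebra ℝ L] {t : LieSubalgebra ℝ L}

theorem SpansByRoots.ext (hspan : SpansByRoots L t) {σ : ℂ →+* ℂ} {f f' : L →ₛₗ[σ] L}
    (hcspan : ∀ H ∈ cspan L t, f H = f' H)
    (hroot : ∀ a, IsRoot L t a → ∀ X ∈ rootSpace L t a, f X = f' X) : f = f' :=
  LinearMap.ext_on hspan <| by
    rintro X (hX | ⟨a, ha, hX⟩)
    exacts [hcspan X hX, hroot a ha X hX]

theorem IsExpAd.smul_apply_of_mem_rootSpace (hexp : IsExpAd L expAd) (c : ℂ) {W X : L}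
    {a : Module.Dual ℂ L} (hW : W ∈ cspan L t) (hX : X ∈ rootSpace L t a) :
    expAd (c • W) X = exp (c * a W) • X :=
  hexp.eig _ _ _ <| by rw [smul_lie, hX W hW, smul_smul]

theorem IsExpAd.tau_ne_one (hexp : IsExpAd L expAd) {W : L} (hW : W ∈ cspan L t)
    {a : Module.Dual ℂ L} (ha : IsRoot L t a) (haW : a W = 1) : tau L expAd W ≠ 1 := by
  obtain ⟨-, X, hX0, hX⟩ := ha
  intro h
  have hX' : tau L expAd W X = -X := by
    rw [tau, hexp.smul_apply_of_mem_rootSpace _ hW hX, haW, mul_one, exp_pi_mul_I, neg_one_smul]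
  have h2 : (2 : ℂ) • X = 0 := by
    rw [h] at hX'
    change X = -X at hX'
    linear_combination (norm := module) hX'
  exact hX0 ((smul_eq_zero.1 h2).resolve_left two_ne_zero)

/-- `expAd (c • W)` fixes `t_ℂ` and acts on the `a`-root space by `exp (c * a W)`, which `hg.conj`
turns into `exp (c * (-a) W)` exactly when `c * a W` is imaginary. -/
theorem IsExpAd.conj_smul_apply [IsScalarTower ℝ ℂ L] {g : LieSubalgebra ℝ L}
    (hexp : IsExpAd L expAd) (hg : IsCompactForm L g) (hle : t ≤ g)
    (hab : ∀ x ∈ t, ∀ y ∈ t, ⁅x, y⁆ = (0 : L)) (hspan : SpansByRoots L t) {c : ℂ} {W : L}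
    (hW : W ∈ cspan L t) (hc : ∀ a, IsRoot L t a → (c * a W).re = 0) (z : L) :
    hg.conj (expAd (c • W) z) = expAd (c • W) (hg.conj z) := by
  let E := (expAd (c • W)).toLinearEquiv.toLinearMap
  suffices h : hg.conj.comp E = E.comp hg.conj from LinearMap.congr_fun h z
  have hfix : ∀ H ∈ cspan L t, E H = H := fun H hH =>
    hexp.apply_of_lie_eq_zero (lie_eq_zero_of_mem_cspan hab (Submodule.smul_mem _ c hW) hH)
  refine hspan.ext (fun H hH => ?_) (fun a ha X hX => ?_)
  · simp only [LinearMap.comp_apply, hfix H hH, hfix _ (hg.conj_mem_cspan hle hH)]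
  · simp only [LinearMap.comp_apply, E, LinearEquiv.coe_coe, LieEquiv.coe_toLinearEquiv,
      hexp.smul_apply_of_mem_rootSpace c hW hX,
      hexp.smul_apply_of_mem_rootSpace c hW (hg.conj_mem_rootSpace hle hX), map_smulₛₗ,
      ← exp_conj, LinearMap.neg_apply, mul_neg]
    congr 2
    exact Complex.ext (by simp only [conj_re, neg_re, hc a ha, neg_zero])
      (by simp only [conj_im, neg_im])

theorem IsExpAd.smul_apply_mem [IsScalarTower ℝ ℂ L] {g : LieSubalgebra ℝ L}
    (hexp : IsExpAd L expAd) (hg : IsCompactForm L g) (hle : t ≤ g)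
    (hab : ∀ x ∈ t, ∀ y ∈ t, ⁅x, y⁆ = (0 : L)) (hspan : SpansByRoots L t) {c : ℂ} {W : L}
    (hW : W ∈ cspan L t) (hc : ∀ a, IsRoot L t a → (c * a W).re = 0) {x : L} (hx : x ∈ g) :
    expAd (c • W) x ∈ g := by
  rw [← hg.conj_eq_self_iff, hexp.conj_smul_apply hg hle hab hspan hW hc,
    hg.conj_eq_self_iff.2 hx]

/-- `Ad(exp (π/2) √-1 W)` acts on the root spaces by `exp (π/2 √-1 a W) ∈ {1, I, -I}`. -/
theorem IsExpAd.sigmaAd_cubic [IsScalarTower ℝ ℂ L] (hexp : IsExpAd L expAd)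
    (hab : ∀ x ∈ t, ∀ y ∈ t, ⁅x, y⁆ = (0 : L)) (hspan : SpansByRoots L t) {W : L}
    (hW : W ∈ cspan L t) (hval : ∀ a, IsRoot L t a → a W = 0 ∨ a W = 1 ∨ a W = -1) (z : L) :
    sigmaAd L expAd W (sigmaAd L expAd W (sigmaAd L expAd W z)) + sigmaAd L expAd W z =
      sigmaAd L expAd W (sigmaAd L expAd W z) + z := by
  let S := (sigmaAd L expAd W).toLinearEquiv.toLinearMap
  suffices h : S ∘ₗ S ∘ₗ S + S = S ∘ₗ S + LinearMap.id from LinearMap.congr_fun h z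
  refine hspan.ext (fun H hH => ?_) (fun a ha X hX => ?_)
  · have hH' : S H = H := hexp.apply_of_lie_eq_zero
      (lie_eq_zero_of_mem_cspan hab (Submodule.smul_mem _ _ hW) hH)
    simp [hH']
  · have hX' : S X = exp (((Real.pi / 2 : ℝ) : ℂ) * I * a W) • X :=
      hexp.smul_apply_of_mem_rootSpace _ hW hX
    have hcubic : ∀ c : ℂ, c = 1 ∨ c = I ∨ c = -I → c * c * c + c = c * c + 1 := by
      rintro c (rfl | rfl | rfl) <;> ring_nf <;> simp [I_sq, I_pow_three]
    simp only [LinearMap.add_apply, LinearMap.comp_apply, LinearMap.id_apply, hX', map_smul,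
      smul_smul]
    rw [← add_smul, hcubic, add_smul, one_smul]
    rcases hval a ha with h | h | h <;> simp [h, exp_neg]

end ExpAd

theorem stmt_5_general
    (gC : Type) [LieRing gC] [LieAlgebra ℂ gC] [LieAlgebra ℝ gC]
    [IsScalarTower ℝ ℂ gC]
    (g t : LieSubalgebra ℝ gC)
    (hg : IsCompactForm gC g) (ht : IsMaxAbelian gC g t)
    (expAd : gC → (gC ≃ₗ⁅ℂ⁆ gC)) (hexp : IsExpAd gC expAd)
    (hspan : SpansByRoots gC t)
    (n : ℕ) (α : ℕ → Module.Dual ℂ gC) (K : ℕ → gC)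
    (hsys : IsSimpleSystem gC t n α K)
    (δ : Module.Dual ℂ gC) (m : ℕ → ℕ) (hδ : IsHighestRoot gC t n α δ m)
    (i : ℕ) (hi : i ∈ Finset.Icc 1 n) (hmi : m i = 1) :
    FixIn gC g (sigmaAd gC expAd (K i)) = FixIn gC g (tau gC expAd (K i)) ∧
    tau gC expAd (K i) * tau gC expAd (K i) = 1 ∧ tau gC expAd (K i) ≠ 1 ∧
    ∃ θ : gC ≃ₗ⁅ℂ⁆ gC, θ * θ = 1 ∧ θ ≠ 1 ∧ (∀ x ∈ g, θ x ∈ g) ∧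
      FixIn gC g (sigmaAd gC expAd (K i)) = FixIn gC g θ := by
  have hKi := hsys.K_mem i hi
  have hval := fun a (ha : IsRoot gC t a) =>
    hδ.root_apply_K_eq_zero_or_one_or_neg_one hg ht.le hsys hi hmi ha
  have hcubic := hexp.sigmaAd_cubic ht.abelian hspan hKi hval
  have hτ : ∀ x, tau gC expAd (K i) x = sigmaAd gC expAd (K i) (sigmaAd gC expAd (K i) x) :=
    fun x => by rw [hexp.tau_eq_sigmaAd_mul_sigmaAd]; rfl
  have hfix : FixIn gC g (sigmaAd gC expAd (K i)) = FixIn gC g (tau gC expAd (K i)) := by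
    ext x
    refine and_congr_right fun _ => ⟨fun hx => by rw [hτ, hx, hx], fun hx => ?_⟩
    exact LinearMap.apply_eq_self_of_cubic hcubic ((hτ x).symm.trans hx)
  have hinv : tau gC expAd (K i) * tau gC expAd (K i) = 1 :=
    LieEquiv.ext fun x => by
      change tau gC expAd (K i) (tau gC expAd (K i) x) = x
      rw [hτ, hτ]
      exact LinearMap.apply_four_of_cubic hcubic x
  have hne : tau gC expAd (K i) ≠ 1 :=
    hexp.tau_ne_one hKi hδ.isRoot ((hδ.apply_K hsys hi).trans (by simp [hmi]))
  have hmem : ∀ x ∈ g, tau gC expAd (K i) x ∈ g := fun x =>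
    hexp.smul_apply_mem hg ht.le ht.abelian hspan hKi fun a ha => by
      rcases hval a ha with h | h | h <;> simp [h]
  exact ⟨hfix, hinv, hne, _, hinv, hne, hmem, hfix⟩

/-- Remark 2.2 (1), first part.  Let `g` be a compact simple Lie algebra,
`t` a maximal abelian subalgebra, `δ = Σ m_j α_j` the highest root and `K i` the dual basis
of `t_ℂ`.  If `m i = 1` and `σ = Ad(exp (π/2) √-1 K i)`, then `g^σ = g^{τ_{K i}}` where
`τ_{K i} = Ad(exp π √-1 K i)`; consequently, since `τ_{K i}` is an involution,
`(g, g^σ)` is a symmetric pair. -/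
theorem stmt_5
    (gC : Type) [LieRing gC] [LieAlgebra ℂ gC] [LieAlgebra ℝ gC]
    [IsScalarTower ℝ ℂ gC] [FiniteDimensional ℂ gC]
    [LieAlgebra.IsSimple ℂ gC]
    (g t : LieSubalgebra ℝ gC)
    (hg : IsCompactForm gC g) (ht : IsMaxAbelian gC g t)
    (expAd : gC → (gC ≃ₗ⁅ℂ⁆ gC)) (hexp : IsExpAd gC expAd)
    (hspan : SpansByRoots gC t)
    (n : ℕ) (α : ℕ → Module.Dual ℂ gC) (K : ℕ → gC)
    (hsys : IsSimpleSystem gC t n α K)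
    (δ : Module.Dual ℂ gC) (m : ℕ → ℕ) (hδ : IsHighestRoot gC t n α δ m)
    (i : ℕ) (hi : i ∈ Finset.Icc 1 n) (hmi : m i = 1) :
    FixIn gC g (sigmaAd gC expAd (K i)) = FixIn gC g (tau gC expAd (K i)) ∧
    tau gC expAd (K i) * tau gC expAd (K i) = 1 ∧ tau gC expAd (K i) ≠ 1 ∧
    ∃ θ : gC ≃ₗ⁅ℂ⁆ gC, θ * θ = 1 ∧ θ ≠ 1 ∧ (∀ x ∈ g, θ x ∈ g) ∧
      FixIn gC g (sigmaAd gC expAd (K i)) = FixIn gC g θ :=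
  stmt_5_general gC g t hg ht expAd hexp hspan n α K hsys δ m hδ i hi hmi

end Paper
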